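/- arXiv:1610.09967 — 2 statements merged into one kernel-verified Lean document; each statement's English description precedes it below -/
import Mathlib

section
/- Let κ > 1 and p > 1. Then for every sequence x : ℕ → ℂ with ‖x‖_p < ∞ one has ‖A_κ(x)‖_p ≤ κ^{(1−p)/p} ‖x‖_p, and the constant is sharp: ‖A_κ(ω(z))‖_p / ‖ω(z)‖_p → κ^{(1−p)/p} as z → 1⁻. In particular the ℓ^p → ℓ^p norm of A_κ equals κ^{(1−p)/p}. -/
/-!
The kernel `K k n = C(k,n) (κ-1)^(k-n) κ^(-(k+1))` of `A_κ` is nonnegative, its rows sum to `κ⁻¹`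
(binomial theorem) and its columns sum to `1` (negative binomial series in `(κ-1)/κ`). Hölder's
inequality on each row followed by an exchange of summations (Schur's test) bounds
`‖A_κ x‖_p^p` by `κ^(1-p) ‖x‖_p^p`.

For sharpness, `A_κ` maps the geometric distribution `ω(z)` to `ω(1 - (1-z)/κ)`, and
`‖ω(z)‖_p^p = (1-z)^p / (1-z^p)`. Writing `1 - z^p = (1-z) σ(z)` with `σ` the difference quotient
of `t ↦ t^p` at `1`, the ratio of `p`-th powers is `κ^(1-p) σ(z) / σ(1 - (1-z)/κ)`, and both
difference quotients tend to `p` as `z → 1⁻`.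
-/

/-- The ℓ^p norm of a sequence of complex numbers. -/
noncomputable def lpNorm (p : ℝ) (x : ℕ → ℂ) : ℝ :=
  (∑' n : ℕ, ‖x n‖ ^ p) ^ (1 / p)

/-- The discrete quantum-limited amplifier with parameter `κ`:
`[A_κ(x)]_k = ∑_{n=0}^k C(k,n) (κ-1)^{k-n} κ^{-(k+1)} x_n`. -/
noncomputable def amp (κ : ℝ) (x : ℕ → ℂ) : ℕ → ℂ :=
  fun k => ∑ n ∈ Finset.range (k + 1),
    (Nat.choose k n : ℂ) * ((κ - 1 : ℝ) : ℂ) ^ (k - n) * ((κ : ℝ) : ℂ)⁻¹ ^ (k + 1) * x n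

/-- The geometric probability distribution on ℕ with ratio `z`, as a complex sequence. -/
noncomputable def geom (z : ℝ) : ℕ → ℂ := fun n => (((1 - z) * z ^ n : ℝ) : ℂ)

open Finset Real Filter Topology

section Schur

theorem rpow_sum_mul_le_rpow_sum_mul_sum_mul_rpow {ι : Type*} (s : Finset ι) {p : ℝ}
    (hp : 1 ≤ p) {w f : ι → ℝ} (hw : ∀ i, 0 ≤ w i) (hf : ∀ i, 0 ≤ f i) :
    (∑ i ∈ s, w i * f i) ^ p ≤ (∑ i ∈ s, w i) ^ (p - 1) * ∑ i ∈ s, w i * f i ^ p := by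
  have hp0 : 0 < p := by linarith
  have hW : 0 ≤ ∑ i ∈ s, w i := sum_nonneg fun i _ => hw i
  have hS : 0 ≤ ∑ i ∈ s, w i * f i ^ p :=
    sum_nonneg fun i _ => mul_nonneg (hw i) (rpow_nonneg (hf i) _)
  calc (∑ i ∈ s, w i * f i) ^ p
      ≤ ((∑ i ∈ s, w i) ^ (1 - p⁻¹) * (∑ i ∈ s, w i * f i ^ p) ^ p⁻¹) ^ p :=
        rpow_le_rpow (sum_nonneg fun i _ => mul_nonneg (hw i) (hf i))
          (inner_le_weight_mul_Lp_of_nonneg s hp w f hw hf) hp0.le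
    _ = (∑ i ∈ s, w i) ^ (p - 1) * ∑ i ∈ s, w i * f i ^ p := by
        rw [mul_rpow (rpow_nonneg hW _) (rpow_nonneg hS _), ← rpow_mul hW, ← rpow_mul hS,
          inv_mul_cancel₀ hp0.ne', rpow_one, sub_mul, one_mul, inv_mul_cancel₀ hp0.ne']

variable {K : ℕ → ℕ → ℝ} {y : ℕ → ℝ} {p a b : ℝ}

/-- Schur's test, for lower-triangular kernels. -/
theorem sum_range_rpow_triangular_le (hp : 1 ≤ p) (hK : ∀ k n, 0 ≤ K k n)
    (hrow : ∀ k, ∑ n ∈ range (k + 1), K k n ≤ a) (hcol : ∀ n N, ∑ k ∈ Ico n N, K k n ≤ b)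
    (hy : ∀ n, 0 ≤ y n) (hys : Summable fun n => y n ^ p) (N : ℕ) :
    ∑ k ∈ range N, (∑ n ∈ range (k + 1), K k n * y n) ^ p
      ≤ a ^ (p - 1) * b * ∑' n, y n ^ p := by
  have ha : 0 ≤ a := (sum_nonneg fun n _ => hK 0 n).trans (hrow 0)
  have hb : 0 ≤ b := by simpa using hcol 0 0
  have hyp : ∀ n, 0 ≤ y n ^ p := fun n => rpow_nonneg (hy n) _
  have hrow_rpow : ∀ k, (∑ n ∈ range (k + 1), K k n) ^ (p - 1) ≤ a ^ (p - 1) := fun k =>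
    rpow_le_rpow (sum_nonneg fun n _ => hK k n) (hrow k) (by linarith)
  have hswap : ∑ k ∈ range N, ∑ n ∈ range (k + 1), K k n * y n ^ p
      = ∑ n ∈ range N, (∑ k ∈ Ico n N, K k n) * y n ^ p := by
    rw [sum_comm' (t' := range N) (s' := fun n => Ico n N)
      (fun k n => by simp only [mem_range, mem_Ico]; omega)]
    simp only [sum_mul]
  calc ∑ k ∈ range N, (∑ n ∈ range (k + 1), K k n * y n) ^ p
      ≤ ∑ k ∈ range N, a ^ (p - 1) * ∑ n ∈ range (k + 1), K k n * y n ^ p :=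
        sum_le_sum fun k _ =>
          (rpow_sum_mul_le_rpow_sum_mul_sum_mul_rpow _ hp (hK k) hy).trans <|
            mul_le_mul_of_nonneg_right (hrow_rpow k)
              (sum_nonneg fun n _ => mul_nonneg (hK k n) (hyp n))
    _ = a ^ (p - 1) * ∑ n ∈ range N, (∑ k ∈ Ico n N, K k n) * y n ^ p := by
        rw [← mul_sum, hswap]
    _ ≤ a ^ (p - 1) * ∑ n ∈ range N, b * y n ^ p :=
        mul_le_mul_of_nonneg_left
          (sum_le_sum fun n _ => mul_le_mul_of_nonneg_right (hcol n N) (hyp n)) (rpow_nonneg ha _)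
    _ ≤ a ^ (p - 1) * (b * ∑' n, y n ^ p) := by
        rw [← mul_sum]
        exact mul_le_mul_of_nonneg_left
          (mul_le_mul_of_nonneg_left (Summable.sum_le_tsum _ (fun n _ => hyp n) hys) hb)
          (rpow_nonneg ha _)
    _ = a ^ (p - 1) * b * ∑' n, y n ^ p := (mul_assoc _ _ _).symm

end Schur

section Amplifier

variable {κ : ℝ}

noncomputable def ampKernel (κ : ℝ) (k n : ℕ) : ℝ :=
  (k.choose n : ℝ) * (κ - 1) ^ (k - n) * κ⁻¹ ^ (k + 1)

theorem ampKernel_nonneg (hκ : 1 ≤ κ) (k n : ℕ) : 0 ≤ ampKernel κ k n := by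
  have : 0 ≤ κ - 1 := by linarith
  unfold ampKernel
  positivity

theorem sum_range_ampKernel (hκ : κ ≠ 0) (k : ℕ) :
    ∑ n ∈ range (k + 1), ampKernel κ k n = κ⁻¹ := by
  have hbinom : κ ^ k = ∑ n ∈ range (k + 1), (k.choose n : ℝ) * (κ - 1) ^ (k - n) := by
    rw [show κ = 1 + (κ - 1) by ring, add_pow]
    simp only [one_pow, one_mul, add_sub_cancel_left, mul_comm]
  simp only [ampKernel]
  rw [← sum_mul, ← hbinom, pow_succ, inv_pow, ← mul_assoc,
    mul_inv_cancel₀ (pow_ne_zero _ hκ), one_mul]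

theorem hasSum_ampKernel_column (hκ : 1 ≤ κ) (n : ℕ) :
    HasSum (fun j => ampKernel κ (j + n) n) 1 := by
  have hκ0 : 0 < κ := by linarith
  have hr : ‖(κ - 1) / κ‖ < 1 := by
    rw [norm_div, Real.norm_of_nonneg (by linarith), Real.norm_of_nonneg hκ0.le,
      div_lt_one hκ0]
    linarith
  have h1r : 1 - (κ - 1) / κ = κ⁻¹ := by field_simp; ring
  have hsum := (hasSum_choose_mul_geometric_of_norm_lt_one n hr).mul_left (κ⁻¹ ^ (n + 1))
  rw [h1r, ← mul_div_assoc, mul_one, div_self (pow_ne_zero _ (inv_ne_zero hκ0.ne'))] at hsum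
  refine (funext fun j => ?_ : (fun j => ampKernel κ (j + n) n) = _) ▸ hsum
  simp only [ampKernel]
  rw [Nat.add_sub_cancel, div_pow, div_eq_mul_inv, ← inv_pow]
  ring

theorem sum_Ico_ampKernel_le_one (hκ : 1 ≤ κ) (n N : ℕ) :
    ∑ k ∈ Ico n N, ampKernel κ k n ≤ 1 := by
  rw [sum_Ico_eq_sum_range]
  simp_rw [add_comm n]
  exact sum_le_hasSum _ (fun j _ => ampKernel_nonneg hκ _ _) (hasSum_ampKernel_column hκ n)

theorem norm_amp_le (hκ : 1 ≤ κ) (x : ℕ → ℂ) (k : ℕ) :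
    ‖amp κ x k‖ ≤ ∑ n ∈ range (k + 1), ampKernel κ k n * ‖x n‖ := by
  refine (norm_sum_le _ _).trans_eq (sum_congr rfl fun n _ => ?_)
  simp only [ampKernel, norm_mul, norm_pow, norm_inv, Complex.norm_real, Complex.norm_natCast,
    Real.norm_of_nonneg (by linarith : (0 : ℝ) ≤ κ - 1),
    Real.norm_of_nonneg (by linarith : 0 ≤ κ)]

theorem tsum_norm_amp_rpow_le {p : ℝ} (hκ : 1 ≤ κ) (hp : 1 ≤ p) {x : ℕ → ℂ}
    (hx : Summable fun n => ‖x n‖ ^ p) :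
    ∑' k, ‖amp κ x k‖ ^ p ≤ κ ^ (1 - p) * ∑' n, ‖x n‖ ^ p := by
  have hκ0 : 0 < κ := by linarith
  have hconst : κ⁻¹ ^ (p - 1) * 1 = κ ^ (1 - p) := by
    rw [mul_one, inv_rpow hκ0.le, ← rpow_neg hκ0.le, neg_sub]
  refine Real.tsum_le_of_sum_range_le (fun k => rpow_nonneg (norm_nonneg _) _) fun N => ?_
  rw [← hconst]
  refine (sum_le_sum fun k _ => ?_).trans <|
    sum_range_rpow_triangular_le hp (ampKernel_nonneg hκ)
      (fun k => (sum_range_ampKernel hκ0.ne' k).le) (sum_Ico_ampKernel_le_one hκ)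
      (fun n => norm_nonneg (x n)) hx N
  exact rpow_le_rpow (norm_nonneg _) (norm_amp_le hκ x k) (by linarith)

theorem lpNorm_amp_le {p : ℝ} (hκ : 1 ≤ κ) (hp : 1 ≤ p) {x : ℕ → ℂ}
    (hx : Summable fun n => ‖x n‖ ^ p) :
    lpNorm p (amp κ x) ≤ κ ^ ((1 - p) / p) * lpNorm p x := by
  have hκ0 : 0 ≤ κ := by linarith
  have hS : 0 ≤ ∑' n, ‖x n‖ ^ p := tsum_nonneg fun n => rpow_nonneg (norm_nonneg _) _
  calc lpNorm p (amp κ x)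
      ≤ (κ ^ (1 - p) * ∑' n, ‖x n‖ ^ p) ^ (1 / p) :=
        rpow_le_rpow (tsum_nonneg fun k => rpow_nonneg (norm_nonneg _) _)
          (tsum_norm_amp_rpow_le hκ hp hx) (by positivity)
    _ = κ ^ ((1 - p) / p) * lpNorm p x := by
        rw [lpNorm, mul_rpow (rpow_nonneg hκ0 _) hS, ← rpow_mul hκ0, mul_one_div]

end Amplifier

section Geometric

variable {p z : ℝ}

theorem amp_geom {κ : ℝ} (hκ : κ ≠ 0) (z : ℝ) :
    amp κ (geom z) = geom (1 - (1 - z) / κ) := by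
  have hκc : (κ : ℂ) ≠ 0 := Complex.ofReal_ne_zero.2 hκ
  funext k
  have hterm : ∀ n ∈ range (k + 1),
      (k.choose n : ℂ) * ((κ - 1 : ℝ) : ℂ) ^ (k - n) * ((κ : ℝ) : ℂ)⁻¹ ^ (k + 1) *
        (((1 - z) * z ^ n : ℝ) : ℂ)
      = (κ : ℂ)⁻¹ ^ (k + 1) * (1 - z) *
          ((z : ℂ) ^ n * ((κ : ℂ) - 1) ^ (k - n) * k.choose n) := by
    intro n _
    push_cast
    ring
  simp only [amp, geom]
  rw [sum_congr rfl hterm, ← mul_sum, ← add_pow]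
  push_cast
  rw [show (1 : ℂ) - (1 - (1 - z) / κ) = (1 - z) * (κ : ℂ)⁻¹ by ring,
    show (1 : ℂ) - (1 - z) / κ = (z + (κ - 1)) * (κ : ℂ)⁻¹ by field_simp; ring,
    mul_pow]
  ring

theorem slope_rpow_one_pos (hp : 0 < p) (hz0 : 0 ≤ z) (hz1 : z < 1) :
    0 < slope (fun t : ℝ => t ^ p) 1 z := by
  rw [slope_def_field, one_rpow]
  exact div_pos_of_neg_of_neg (by linarith [rpow_lt_one hz0 hz1 hp]) (by linarith)

theorem hasSum_norm_geom_rpow (hp : 0 < p) (hz0 : 0 ≤ z) (hz1 : z < 1) :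
    HasSum (fun n => ‖geom z n‖ ^ p) ((1 - z) ^ p / (1 - z ^ p)) := by
  have hzp : ∀ n : ℕ, ‖geom z n‖ ^ p = (1 - z) ^ p * (z ^ p) ^ n := fun n => by
    rw [geom, Complex.norm_real, Real.norm_of_nonneg (by positivity),
      mul_rpow (by linarith) (by positivity), ← rpow_natCast, ← rpow_natCast,
      ← rpow_mul hz0, ← rpow_mul hz0, mul_comm (n : ℝ) p]
  simp only [hzp, div_eq_mul_inv]
  exact (hasSum_geometric_of_lt_one (rpow_nonneg hz0 _) (rpow_lt_one hz0 hz1 hp)).mul_left _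

theorem lpNorm_geom (hp : 0 < p) (hz0 : 0 ≤ z) (hz1 : z < 1) :
    lpNorm p (geom z) = ((1 - z) ^ (p - 1) / slope (fun t : ℝ => t ^ p) 1 z) ^ (1 / p) := by
  have hz : 1 - z ≠ 0 := by linarith
  rw [lpNorm, (hasSum_norm_geom_rpow hp hz0 hz1).tsum_eq, rpow_sub_one hz, slope_def_field,
    one_rpow, ← neg_div_neg_eq (z ^ p - 1), neg_sub, neg_sub, div_div_div_cancel_right₀ hz]

theorem lpNorm_amp_geom_div_lpNorm_geom {κ : ℝ} (hκ : 1 ≤ κ) (hp : 0 < p) (hz0 : 0 ≤ z)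
    (hz1 : z < 1) :
    lpNorm p (amp κ (geom z)) / lpNorm p (geom z)
      = (κ ^ (1 - p) * (slope (fun t : ℝ => t ^ p) 1 z
          / slope (fun t : ℝ => t ^ p) 1 (1 - (1 - z) / κ))) ^ (1 / p) := by
  have hκ0 : 0 < κ := by linarith
  have hw0 : 0 ≤ 1 - (1 - z) / κ := by
    rw [sub_nonneg, div_le_one hκ0]
    linarith
  have hw1 : 1 - (1 - z) / κ < 1 := by
    have := div_pos (sub_pos.2 hz1) hκ0
    linarith
  have hsz := slope_rpow_one_pos hp hz0 hz1
  have hsw := slope_rpow_one_pos hp hw0 hw1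
  rw [amp_geom hκ0.ne', lpNorm_geom hp hw0 hw1, lpNorm_geom hp hz0 hz1,
    ← div_rpow (by positivity) (by positivity), sub_sub_cancel, div_rpow (by linarith) hκ0.le,
    show 1 - p = -(p - 1) by ring, rpow_neg hκ0.le]
  have hκp : κ ^ (p - 1) ≠ 0 := (rpow_pos_of_pos hκ0 _).ne'
  have hzp : (1 - z) ^ (p - 1) ≠ 0 := (rpow_pos_of_pos (by linarith) _).ne'
  congr 1
  field_simp

theorem tendsto_slope_rpow_one_nhdsLT (p : ℝ) :
    Tendsto (slope (fun t : ℝ => t ^ p) 1) (𝓝[<] 1) (𝓝 p) := by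
  have h := Real.hasDerivAt_rpow_const (x := 1) (p := p) (Or.inl one_ne_zero)
  rw [one_rpow, mul_one] at h
  exact (hasDerivAt_iff_tendsto_slope_left_right.1 h).1

theorem tendsto_one_sub_sub_div_nhdsLT {κ : ℝ} (hκ : 0 < κ) :
    Tendsto (fun z => 1 - (1 - z) / κ) (𝓝[<] 1) (𝓝[<] 1) := by
  refine tendsto_nhdsWithin_iff.2 ⟨?_, ?_⟩
  · have hcont : Continuous fun z : ℝ => 1 - (1 - z) / κ := by fun_prop
    simpa using (hcont.tendsto 1).mono_left nhdsWithin_le_nhds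
  · filter_upwards [self_mem_nhdsWithin] with z (hz : z < 1)
    have := div_pos (sub_pos.2 hz) hκ
    rw [Set.mem_Iio]
    linarith

end Geometric

theorem amplifier_pp_norm (κ p : ℝ) (hκ : 1 < κ) (hp : 1 < p) :
    (∀ x : ℕ → ℂ, Summable (fun n => ‖x n‖ ^ p) →
        lpNorm p (amp κ x) ≤ κ ^ ((1 - p) / p) * lpNorm p x) ∧
    Filter.Tendsto (fun z => lpNorm p (amp κ (geom z)) / lpNorm p (geom z))
      (nhdsWithin 1 (Set.Iio 1)) (nhds (κ ^ ((1 - p) / p))) := by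
  have hκ0 : 0 < κ := by linarith
  have hp0 : 0 < p := by linarith
  refine ⟨fun x hx => lpNorm_amp_le hκ.le hp.le hx, ?_⟩
  have hslope := tendsto_slope_rpow_one_nhdsLT p
  have hlim := ((hslope.div (hslope.comp (tendsto_one_sub_sub_div_nhdsLT hκ0)) hp0.ne').const_mul
    (κ ^ (1 - p))).rpow_const (p := 1 / p) (Or.inr (by positivity))
  rw [div_self hp0.ne', mul_one, ← rpow_mul hκ0.le, mul_one_div] at hlim
  refine hlim.congr' ?_
  filter_upwards [Ioo_mem_nhdsLT zero_lt_one] with z hz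
  exact (lpNorm_amp_geom_div_lpNorm_geom hκ.le hp0 hz.1.le hz.2).symm
end

section
/- (Duality between the quantum-limited amplifier and attenuator, Fock-diagonal form.) Let κ > 1. For every sequence x : ℕ → ℝ with ∑_{n=0}^∞ |x_n| < ∞ and every bounded sequence y : ℕ → ℝ, all the series below converge absolutely and κ ∑_{k=0}^∞ y_k [A_κ(x)]_k = ∑_{n=0}^∞ [T_{1/κ}(y)]_n x_n. -/
/-- The thinning with parameter `l` acting on real sequences:
`[T_l(x)]_n = ∑_{k} C(k,n) l^n (1-l)^{k-n} x_k`. -/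
noncomputable def thinR (l : ℝ) (x : ℕ → ℝ) : ℕ → ℝ :=
  fun n => ∑' k : ℕ, (Nat.choose k n : ℝ) * l ^ n * (1 - l) ^ (k - n) * x k

/-- The discrete quantum-limited amplifier with parameter `κ`, acting on real sequences:
`[A_κ(x)]_k = ∑_{n=0}^k C(k,n) (κ-1)^{k-n} κ^{-(k+1)} x_n`. -/
noncomputable def ampR (κ : ℝ) (x : ℕ → ℝ) : ℕ → ℝ :=
  fun k => ∑ n ∈ Finset.range (k + 1),
    (Nat.choose k n : ℝ) * (κ - 1) ^ (k - n) * κ⁻¹ ^ (k + 1) * x n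


/-! Both operators are built from the single kernel
`K n k = C(k,n) κ⁻¹ⁿ (1 - κ⁻¹)^(k-n)`: `κ · A_κ(x)_k = ∑ₙ K n k xₙ` and `T_{1/κ}(y)_n = ∑ₖ K n k yₖ`.
By the negative binomial series every row of `K` sums to `κ`, so `K n k yₖ xₙ` is absolutely
summable on `ℕ × ℕ` (with total at most `κ C ∑ |xₙ|` when `|yₖ| ≤ C`), and the duality is
Fubini's theorem for this double series. -/

open Finset

theorem hasSum_choose_mul_pow_sub {𝕜 : Type*} [NormedDivisionRing 𝕜] (n : ℕ) {q : 𝕜}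
    (hq : ‖q‖ < 1) :
    HasSum (fun k : ℕ => (k.choose n : 𝕜) * q ^ (k - n)) (1 / (1 - q) ^ (n + 1)) := by
  rw [← hasSum_nat_add_iff' n]
  have hzero : ∑ k ∈ range n, (k.choose n : 𝕜) * q ^ (k - n) = 0 :=
    sum_eq_zero fun k hk => by simp [Nat.choose_eq_zero_of_lt (mem_range.mp hk)]
  simpa [hzero] using hasSum_choose_mul_geometric_of_norm_lt_one n hq

noncomputable def thinKernel (l : ℝ) (n k : ℕ) : ℝ :=
  (k.choose n : ℝ) * l ^ n * (1 - l) ^ (k - n)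

theorem thinKernel_eq_zero_of_lt {l : ℝ} {n k : ℕ} (h : k < n) : thinKernel l n k = 0 := by
  simp [thinKernel, Nat.choose_eq_zero_of_lt h]

theorem thinKernel_nonneg {l : ℝ} (h0 : 0 ≤ l) (h1 : l ≤ 1) (n k : ℕ) : 0 ≤ thinKernel l n k := by
  have : 0 ≤ 1 - l := by linarith
  unfold thinKernel
  positivity

theorem hasSum_thinKernel {l : ℝ} (h0 : 0 < l) (h2 : l < 2) (n : ℕ) :
    HasSum (thinKernel l n) l⁻¹ := by
  have hq : ‖1 - l‖ < 1 := by rw [Real.norm_eq_abs, abs_lt]; constructor <;> linarith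
  have h := (hasSum_choose_mul_pow_sub n hq).mul_left (l ^ n)
  rw [sub_sub_cancel, pow_succ, one_div, mul_inv, ← mul_assoc, mul_inv_cancel₀ (by positivity),
    one_mul] at h
  have hK : thinKernel l n = fun k => l ^ n * ((k.choose n : ℝ) * (1 - l) ^ (k - n)) :=
    funext fun k => by rw [thinKernel]; ring
  rwa [hK]

theorem mul_ampR_eq_tsum_thinKernel {κ : ℝ} (hκ : κ ≠ 0) (x : ℕ → ℝ) (k : ℕ) :
    κ * ampR κ x k = ∑' n, thinKernel κ⁻¹ n k * x n := by
  rw [tsum_eq_sum (s := range (k + 1)) fun n hn => by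
      rw [thinKernel_eq_zero_of_lt (by simpa using hn), zero_mul], ampR, mul_sum]
  refine sum_congr rfl fun n hn => ?_
  obtain ⟨d, rfl⟩ := Nat.exists_eq_add_of_le (Nat.lt_succ_iff.mp (mem_range.mp hn))
  have hu : κ * κ⁻¹ = 1 := mul_inv_cancel₀ hκ
  rw [thinKernel, Nat.add_sub_cancel_left,
    show 1 - κ⁻¹ = (κ - 1) * κ⁻¹ by linear_combination -hu, mul_pow]
  linear_combination ((n + d).choose n * (κ - 1) ^ d * κ⁻¹ ^ (n + d) * x n : ℝ) * hu

section BoundedSequence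

variable {l C : ℝ} {y : ℕ → ℝ}

theorem abs_thinKernel_mul_le (h0 : 0 ≤ l) (h1 : l ≤ 1) (hC : ∀ k, |y k| ≤ C) (n k : ℕ) :
    |thinKernel l n k * y k| ≤ thinKernel l n k * C := by
  rw [abs_mul, abs_of_nonneg (thinKernel_nonneg h0 h1 n k)]
  exact mul_le_mul_of_nonneg_left (hC k) (thinKernel_nonneg h0 h1 n k)

theorem summable_abs_thinKernel_mul (h0 : 0 < l) (h1 : l ≤ 1) (hC : ∀ k, |y k| ≤ C) (n : ℕ) :
    Summable fun k => |thinKernel l n k * y k| :=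
  Summable.of_nonneg_of_le (fun _ => abs_nonneg _) (abs_thinKernel_mul_le h0.le h1 hC n)
    ((hasSum_thinKernel h0 (by linarith) n).summable.mul_right C)

theorem tsum_abs_thinKernel_mul_le (h0 : 0 < l) (h1 : l ≤ 1) (hC : ∀ k, |y k| ≤ C) (n : ℕ) :
    ∑' k, |thinKernel l n k * y k| ≤ l⁻¹ * C := by
  have hrow := (hasSum_thinKernel h0 (by linarith) n).mul_right C
  rw [← hrow.tsum_eq]
  exact (summable_abs_thinKernel_mul h0 h1 hC n).tsum_le_tsum
    (abs_thinKernel_mul_le h0.le h1 hC n) hrow.summable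

end BoundedSequence

theorem summable_abs_mul_of_tsum_abs_le {α β : Type*} {K : α → β → ℝ} {x : α → ℝ} {M : ℝ}
    (hK : ∀ a, Summable fun b => |K a b|) (hKM : ∀ a, ∑' b, |K a b| ≤ M)
    (hx : Summable fun a => |x a|) :
    Summable fun p : α × β => |K p.1 p.2 * x p.1| := by
  refine (summable_prod_of_nonneg fun _ => abs_nonneg _).mpr ⟨fun a => ?_, ?_⟩
  · simpa only [abs_mul] using (hK a).mul_right |x a|
  · refine Summable.of_nonneg_of_le (fun a => tsum_nonneg fun _ => abs_nonneg _) (fun a => ?_)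
      (hx.mul_left M)
    simp only [abs_mul, tsum_mul_right]
    exact mul_le_mul_of_nonneg_right (hKM a) (abs_nonneg _)

theorem summable_abs_tsum_of_summable_abs {α β : Type*} {f : α × β → ℝ}
    (hf : Summable fun p => |f p|) : Summable fun a => |∑' b, f (a, b)| :=
  Summable.of_nonneg_of_le (fun _ => abs_nonneg _)
    (fun a => by
      have := norm_tsum_le_tsum_norm (f := fun b => f (a, b)) (hf.prod_factor a)
      simpa only [Real.norm_eq_abs] using this)
    hf.prod

theorem amplifier_attenuator_duality (κ : ℝ) (hκ : 1 < κ) (x y : ℕ → ℝ)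
    (hx : Summable (fun n => |x n|)) (hy : ∃ C, ∀ n, |y n| ≤ C) :
    (∀ n, Summable (fun k : ℕ =>
        |(Nat.choose k n : ℝ) * (1 / κ) ^ n * (1 - 1 / κ) ^ (k - n) * y k|)) ∧
    Summable (fun k => |y k * ampR κ x k|) ∧
    Summable (fun n => |thinR (1 / κ) y n * x n|) ∧
    κ * ∑' k : ℕ, y k * ampR κ x k = ∑' n : ℕ, thinR (1 / κ) y n * x n := by
  obtain ⟨C, hC⟩ := hy
  have hκ0 : 0 < κ := one_pos.trans hκ
  have hl1 : 1 / κ ≤ 1 := (div_le_one hκ0).2 hκ.le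
  have hl0 : 0 < 1 / κ := one_div_pos.2 hκ0
  set K := thinKernel (1 / κ)
  have hKy := summable_abs_thinKernel_mul hl0 hl1 hC
  have hF : Summable fun p : ℕ × ℕ => |K p.1 p.2 * y p.2 * x p.1| :=
    summable_abs_mul_of_tsum_abs_le hKy (tsum_abs_thinKernel_mul_le hl0 hl1 hC) hx
  have hrowF (n : ℕ) : ∑' k, K n k * y k * x n = thinR (1 / κ) y n * x n := tsum_mul_right
  have hcolF (k : ℕ) : ∑' n, K n k * y k * x n = κ * (y k * ampR κ x k) := by
    rw [mul_left_comm, mul_ampR_eq_tsum_thinKernel hκ0.ne', ← tsum_mul_left, ← one_div]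
    exact tsum_congr fun n => by ring
  refine ⟨hKy, ?_, ?_, ?_⟩
  · have := summable_abs_tsum_of_summable_abs hF.prod_symm
    simp only [Prod.fst_swap, Prod.snd_swap, hcolF, abs_mul, abs_of_pos hκ0] at this
    simpa [abs_mul] using (summable_mul_left_iff hκ0.ne').1 this
  · simpa only [hrowF] using summable_abs_tsum_of_summable_abs hF
  · calc κ * ∑' k, y k * ampR κ x k = ∑' k, ∑' n, K n k * y k * x n := by
          simp only [hcolF, tsum_mul_left]
      _ = ∑' n, ∑' k, K n k * y k * x n :=
          Summable.tsum_comm (f := fun n k => K n k * y k * x n) hF.of_abs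
      _ = ∑' n, thinR (1 / κ) y n * x n := tsum_congr hrowF
end
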